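/- arXiv:1508.05529 — 2 statements merged into one kernel-verified Lean document; each statement's English description precedes it below -/
import Mathlib

section
/- Let U be a countably complete ultrafilter on a set I and let ⟨(M_i, d_i) : i ∈ I⟩ be a family of complete metric spaces. Let (x^n)_{n<ω} be a sequence in ∏_{i∈I} M_i that is U-Cauchy, i.e., for every ε > 0 there exists N such that for all n, m ≥ N, the set {i ∈ I : d_i(x^n_i, x^m_i) < ε} belongs to U. Then there exists y ∈ ∏_{i∈I} M_i such that for every ε > 0 there exists N with {i ∈ I : d_i(x^n_i, y_i) < ε} ∈ U for all n ≥ N. (Equivalently: the metric ultraproduct (∏_{i∈I} M_i)/∼_U, equipped with the pseudometric d(x,y) = lim_U d_i(x_i, y_i), is a complete metric space.) -/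
/-- An ultrafilter `U` on `I` is countably complete if the intersection of any
countable family of sets belonging to `U` again belongs to `U`. -/
def CountablyComplete {I : Type*} (U : Ultrafilter I) : Prop :=
  ∀ s : ℕ → Set I, (∀ n, s n ∈ U) → (⋂ n, s n) ∈ U

/-- The metric ultraproduct of complete metric spaces by a countably complete
ultrafilter is complete: every `U`-Cauchy sequence `x : ℕ → ∀ i, M i` has a
`U`-limit `y : ∀ i, M i`. -/
theorem ultraproduct_complete {I : Type*} (U : Ultrafilter I)
    (hU : CountablyComplete U) (M : I → Type*) [∀ i, MetricSpace (M i)]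
    [∀ i, CompleteSpace (M i)] (x : ℕ → ∀ i, M i)
    (hx : ∀ ε : ℝ, 0 < ε → ∃ N : ℕ, ∀ n m : ℕ, N ≤ n → N ≤ m →
      {i : I | dist (x n i) (x m i) < ε} ∈ U) :
    ∃ y : ∀ i, M i, ∀ ε : ℝ, 0 < ε → ∃ N : ℕ, ∀ n : ℕ, N ≤ n →
      {i : I | dist (x n i) (y i) < ε} ∈ U := by
  -- choose thresholds
  have hpow : ∀ k : ℕ, (0:ℝ) < (1/2)^k := fun k => by positivity
  choose f hf using fun k => hx ((1/2)^k) (hpow k)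
  set N' : ℕ → ℕ := fun k => (Finset.range (k+1)).sup f with hN'
  have hN'f : ∀ k, f k ≤ N' k := fun k =>
    Finset.le_sup (Finset.self_mem_range_succ k)
  have hN'mono : Monotone N' := fun a b hab =>
    Finset.sup_mono (by simpa using Nat.add_le_add_right hab 1)
  set S : ℕ → Set I := fun k =>
    {i : I | dist (x (N' k) i) (x (N' (k+1)) i) < (1/2)^k} with hS
  have hSU : ∀ k, S k ∈ U := fun k =>
    hf k (N' k) (N' (k+1)) (hN'f k) (le_trans (hN'f k) (hN'mono (Nat.le_succ k)))
  have hSint : (⋂ k, S k) ∈ U := hU S hSU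
  -- for i in the intersection, the sequence k ↦ x (N' k) i is Cauchy
  have key : ∀ i ∈ ⋂ k, S k, ∃ z : M i,
      ∀ k, dist (x (N' k) i) z ≤ 2 * (1/2)^k := by
    intro i hi
    simp only [Set.mem_iInter] at hi
    have hd : ∀ k, dist (x (N' k) i) (x (N' (k+1)) i) ≤ 1 * (1/2)^k := by
      intro k
      have := hi k
      simp only [hS, Set.mem_setOf_eq] at this
      linarith
    have hcauchy : CauchySeq (fun k => x (N' k) i) :=
      cauchySeq_of_le_geometric (1/2) 1 (by norm_num) hd
    obtain ⟨z, hz⟩ := cauchySeq_tendsto_of_complete hcauchy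
    refine ⟨z, fun k => ?_⟩
    have := dist_le_of_le_geometric_of_tendsto (1/2) 1 (by norm_num) hd hz k
    calc dist (x (N' k) i) z ≤ 1 * (1/2)^k / (1 - 1/2) := this
      _ = 2 * (1/2)^k := by ring
  classical
  refine ⟨fun i => if h : i ∈ ⋂ k, S k then (key i h).choose else x 0 i, ?_⟩
  intro ε hε
  obtain ⟨k, hk⟩ := exists_pow_lt_of_lt_one (show (0:ℝ) < ε/3 by linarith)
    (show (1:ℝ)/2 < 1 by norm_num)
  refine ⟨N' k, fun n hn => ?_⟩
  have hT : {i : I | dist (x n i) (x (N' k) i) < (1/2)^k} ∈ U :=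
    hf k n (N' k) (le_trans (hN'f k) hn) (hN'f k)
  filter_upwards [hT, hSint] with i hiT hiS
  simp only [Set.mem_setOf_eq, dif_pos hiS]
  have hz := (key i hiS).choose_spec k
  calc dist (x n i) (key i hiS).choose
      ≤ dist (x n i) (x (N' k) i) + dist (x (N' k) i) (key i hiS).choose :=
        dist_triangle _ _ _
    _ < (1/2)^k + 2 * (1/2)^k := by linarith [hiT]
    _ = 3 * (1/2)^k := by ring
    _ < ε := by linarith
end

section
/- Let U be a countably complete ultrafilter on a set I, let ⟨(M_i, d_i) : i ∈ I⟩ be a family of complete metric spaces, and for each i let A_i be a dense subset of M_i. Then: (a) for every x ∈ ∏_{i∈I} M_i there exists a sequence (a^n)_{n<ω} with a^n ∈ ∏_{i∈I} A_i such that d_i(a^n_i, x_i) < 2^{−n} for all i and n, so that x is a d-limit (with respect to d(u,v) = lim_U d_i(u_i, v_i)) of the sequence (a^n); and (b) every sequence (a^n)_{n<ω} in ∏_{i∈I} A_i that is U-Cauchy (for every ε > 0 there is N such that for all n, m ≥ N, {i : d_i(a^n_i, a^m_i) < ε} ∈ U) admits y ∈ ∏_{i∈I} M_i such that for every ε > 0,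 {i : d_i(a^n_i, y_i) < ε} ∈ U for all sufficiently large n. (This expresses that the metric completion of the ultraproduct ∏_U A_i equals the metric ultraproduct ∏^d_U M_i.) -/
/-- The metric completion of the ultraproduct of dense subsets `A i ⊆ M i` equals the
metric ultraproduct of the complete spaces `M i`:
(a) every `x : ∀ i, M i` is approximated pointwise within `2⁻ⁿ` by sequences from
`∀ i, A i`, so `x` is a `d`-limit of elements of the ultraproduct of the `A i`; and
(b) every `U`-Cauchy sequence of elements of `∀ i, A i` has a `U`-limit in `∀ i, M i`. -/
theorem ultraproduct_dense_completion {I : Type*} (U : Ultrafilter I)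
    (hU : CountablyComplete U) (M : I → Type*) [∀ i, MetricSpace (M i)]
    [∀ i, CompleteSpace (M i)] (A : ∀ i, Set (M i)) (hA : ∀ i, Dense (A i)) :
    (∀ x : ∀ i, M i, ∃ a : ℕ → ∀ i, M i,
      (∀ n i, a n i ∈ A i) ∧ (∀ n i, dist (a n i) (x i) < (2 : ℝ)⁻¹ ^ n)) ∧
    (∀ a : ℕ → ∀ i, M i, (∀ n i, a n i ∈ A i) →
      (∀ ε : ℝ, 0 < ε → ∃ N : ℕ, ∀ n m : ℕ, N ≤ n → N ≤ m →
        {i : I | dist (a n i) (a m i) < ε} ∈ U) →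
      ∃ y : ∀ i, M i, ∀ ε : ℝ, 0 < ε → ∃ N : ℕ, ∀ n : ℕ, N ≤ n →
        {i : I | dist (a n i) (y i) < ε} ∈ U) := by
  constructor
  · -- part (a)
    intro x
    have h : ∀ n i, ∃ b ∈ A i, dist (x i) b < (2 : ℝ)⁻¹ ^ n := by
      intro n i
      exact Metric.mem_closure_iff.1 ((hA i).closure_eq ▸ Set.mem_univ (x i) : x i ∈ closure (A i))
        _ (pow_pos (by norm_num) n)
    choose a ha hd using h
    exact ⟨a, ha, fun n i => by rw [dist_comm]; exact hd n i⟩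
  · -- part (b)
    intro a ha hC
    -- choose thresholds
    have hCk : ∀ k : ℕ, ∃ N : ℕ, ∀ n m : ℕ, N ≤ n → N ≤ m →
        {i : I | dist (a n i) (a m i) < (2 : ℝ)⁻¹ ^ k} ∈ U :=
      fun k => hC _ (pow_pos (by norm_num) k)
    choose N hN using hCk
    -- countable intersection
    let g : ℕ × ℕ × ℕ → Set I := fun p =>
      if N p.1 ≤ p.2.1 ∧ N p.1 ≤ p.2.2 then
        {i : I | dist (a p.2.1 i) (a p.2.2 i) < (2 : ℝ)⁻¹ ^ p.1} else Set.univ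
    have hg : ∀ p, g p ∈ U := by
      intro p
      by_cases h : N p.1 ≤ p.2.1 ∧ N p.1 ≤ p.2.2
      · simpa [g, h] using hN p.1 p.2.1 p.2.2 h.1 h.2
      · simp only [g, if_neg h]; exact Filter.univ_mem
    let e : ℕ ≃ ℕ × ℕ × ℕ := (Denumerable.eqv (ℕ × ℕ × ℕ)).symm
    have hS : (⋂ n, g (e n)) ∈ U := hU _ (fun n => hg (e n))
    set S := ⋂ n, g (e n) with hSdef
    have hSmem : ∀ i ∈ S, ∀ k n m : ℕ, N k ≤ n → N k ≤ m →
        dist (a n i) (a m i) < (2 : ℝ)⁻¹ ^ k := by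
      intro i hi k n m hn hm
      have := Set.mem_iInter.1 hi (e.symm (k, n, m))
      simp only [g, Equiv.apply_symm_apply] at this
      rw [if_pos ⟨hn, hm⟩] at this
      exact this
    -- each coordinate sequence is Cauchy on S
    have hcauchy : ∀ i ∈ S, ∃ y : M i, Filter.Tendsto (fun n => a n i) Filter.atTop (nhds y) := by
      intro i hi
      have : CauchySeq (fun n => a n i) := by
        rw [Metric.cauchySeq_iff]
        intro ε hε
        obtain ⟨k, hk⟩ := exists_pow_lt_of_lt_one hε (by norm_num : (2 : ℝ)⁻¹ < 1)
        exact ⟨N k, fun n hn m hm =>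
          lt_trans (hSmem i hi k n m hn hm) hk⟩
      exact cauchySeq_tendsto_of_complete this
    classical
    refine ⟨fun i => if h : i ∈ S then (hcauchy i h).choose else a 0 i, ?_⟩
    intro ε hε
    obtain ⟨k, hk⟩ := exists_pow_lt_of_lt_one hε (by norm_num : (2 : ℝ)⁻¹ < 1)
    refine ⟨N k, fun n hn => ?_⟩
    apply U.sets_of_superset hS
    intro i hi
    simp only [Set.mem_setOf_eq, dif_pos hi]
    have hlim := (hcauchy i hi).choose_spec
    have htend : Filter.Tendsto (fun m => dist (a n i) (a m i)) Filter.atTop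
        (nhds (dist (a n i) (hcauchy i hi).choose)) :=
      (Continuous.tendsto (continuous_const.dist continuous_id) _).comp hlim
    have hle : dist (a n i) (hcauchy i hi).choose ≤ (2 : ℝ)⁻¹ ^ k := by
      refine le_of_tendsto htend ?_
      filter_upwards [Filter.eventually_ge_atTop (N k)] with m hm
      exact le_of_lt (hSmem i hi k n m hn hm)
    exact lt_of_le_of_lt hle hk
end
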